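/- Let 𝕀₆ = ℂ⁶/H be the 6-dimensional complex parallelisable nilmanifold with left-invariant holomorphic frame X₁ = ∂/∂z₁, X₂ = ∂/∂z₂, X₃ = ∂/∂z₃, X₄ = ∂/∂z₄ + z₁∂/∂z₂, X₅ = ∂/∂z₅ + z₁∂/∂z₃, X₆ = ∂/∂z₆ + z₂∂/∂z₃ + z₄∂/∂z₅, and let π₂ = X₁ ∧ X₆. Then π₂ is a holomorphic Poisson structure on 𝕀₆ with H₀(𝕀₆, π₂) ≅ ℂ and H₁(𝕀₆, π₂) ≅ ℂ⁶, whereas dim H_{∂̄}^{5,0}(𝕀₆) + dim H_{∂̄}^{6,1}(𝕀₆) = 6 + 3 = 9; consequently the Dolbeault–Koszul–Brylinski spectral sequence of (𝕀₆, π₂) does not degenerate at the E₁-page. -/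

import Mathlib

/-!
# `E₁`-non-degeneracy for the Poisson structure `π₂ = X₁ ∧ X₆` on `𝕀₆`

Statement 19 of Chen–Chen–Yang–Yang, *Holomorphic Koszul–Brylinski homologies of
Poisson blow-ups* (Section 6.3.2).

`𝕀₆ = ℂ⁶/H` is the compact complex parallelisable six-dimensional nilmanifold with
left-invariant holomorphic frame `X₁, …, X₆` and nonzero Lie brackets
`[X₁,X₄] = X₂`, `[X₁,X₅] = X₃ = [X₂,X₆]`, `[X₄,X₆] = X₅`.  Its invariant forms are
realised concretely as coefficient functions on the monomial basis `w^I ∧ w̄^J`,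
with Dolbeault operators determined by the structure equations
`dw¹ = dw⁴ = dw⁶ = 0`, `dw² = −w¹∧w⁴`, `dw³ = −w¹∧w⁵ − w²∧w⁶`, `dw⁵ = −w⁴∧w⁶`.
For left-invariant Poisson structures the holomorphic Koszul–Brylinski homology of
`𝕀₆` is computed by the total cohomology of the invariant double complex
`(∧^{•,•} g_ℂ^*, ∂_π, ∂̄)`, and the `E₁`-degeneracy of the
Dolbeault–Koszul–Brylinski spectral sequence is expressed by the numerical criterion
of the paper (Lemma 5.6).
-/


noncomputable section

open Module

namespace InvForms

variable (m : ℕ)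

/-- Indexing of the monomial basis `w^I ∧ w̄^J` of left-invariant forms. -/
abbrev Idx := Finset (Fin m) × Finset (Fin m)

/-- Left-invariant complex forms on the nilmanifold, as coefficient functions on the
monomial basis `w^I ∧ w̄^J`. -/
abbrev Forms := Idx m → ℂ

/-- `(-1)^{#{a ∈ s | a < k}}`, the Koszul sign of inserting `w^k` in front of `w^s`. -/
def insSign (k : Fin m) (s : Finset (Fin m)) : ℂ := (-1) ^ (s.filter fun a => a < k).card

/-- Contraction with the frame vector field `X_k` (interior product on the
holomorphic part). -/
def iotaX (k : Fin m) : Forms m →ₗ[ℂ] Forms m :=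
  (Matrix.of fun st st' : Idx m =>
    if st'.1 = insert k st.1 ∧ k ∉ st.1 ∧ st'.2 = st.2 then insSign m k st.1 else 0).mulVecLin

/-- The sign of rewriting `w^S ∧ w^T` as `±w^U`; zero unless `S` and `T` are
disjoint with union `U`. -/
def wedgeCoef (S T U : Finset (Fin m)) : ℂ :=
  if Disjoint S T ∧ S ∪ T = U then
    (-1) ^ ((S ×ˢ T).filter fun ab => ab.2 < ab.1).card
  else 0

/-- The left-invariant holomorphic Dolbeault operator `∂` determined by the structure
coefficients `dc` (so that `∂ w^j = ∑_S dc j S • w^S`): on a complex parallelisable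
nilmanifold, `∂` acts on the monomial `w^I ∧ w̄^J` through the holomorphic factor as a
derivation. -/
def delOp (dc : Fin m → Finset (Fin m) → ℂ) : Forms m →ₗ[ℂ] Forms m :=
  (Matrix.of fun st' st : Idx m =>
    if st'.2 = st.2 then
      ∑ j ∈ st.1, insSign m j (st.1.erase j) *
        ∑ S : Finset (Fin m), dc j S * wedgeCoef m S (st.1.erase j) st'.1
    else 0).mulVecLin

/-- The left-invariant antiholomorphic Dolbeault operator `∂̄` determined by the
structure coefficients `dc` (so that `∂̄ w̄^j = ∑_S dc j S • w̄^S`), acting on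
`w^I ∧ w̄^J` through the antiholomorphic factor with the Koszul sign `(-1)^{|I|}`. -/
def dbarOp (dc : Fin m → Finset (Fin m) → ℂ) : Forms m →ₗ[ℂ] Forms m :=
  (Matrix.of fun st' st : Idx m =>
    if st'.1 = st.1 then
      (-1 : ℂ) ^ st.1.card *
        ∑ j ∈ st.2, insSign m j (st.2.erase j) *
          ∑ S : Finset (Fin m), dc j S * wedgeCoef m S (st.2.erase j) st'.2
    else 0).mulVecLin

/-- Contraction `ι_π` with the left-invariant bivector field
`π = ½ ∑_{a,b} B^{ab} X_a ∧ X_b` (`B` antisymmetric). -/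
def iotaBiv (B : Fin m → Fin m → ℂ) : Forms m →ₗ[ℂ] Forms m :=
  (2⁻¹ : ℂ) • ∑ a : Fin m, ∑ b : Fin m, B a b • (iotaX m a ∘ₗ iotaX m b)

/-- The Koszul–Brylinski operator `∂_π = ι_π ∘ ∂ − ∂ ∘ ι_π` on left-invariant
forms. -/
def kbOp (dc : Fin m → Finset (Fin m) → ℂ) (B : Fin m → Fin m → ℂ) :
    Forms m →ₗ[ℂ] Forms m :=
  iotaBiv m B ∘ₗ delOp m dc - delOp m dc ∘ₗ iotaBiv m B

/-- The subspace of left-invariant forms of pure bidegree `(p, q)`. -/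
def grade (p q : ℤ) : Submodule ℂ (Forms m) where
  carrier := {f | ∀ st : Idx m, f st ≠ 0 → (st.1.card : ℤ) = p ∧ (st.2.card : ℤ) = q}
  add_mem' := by
    intro f g hf hg st hst
    by_cases h1 : f st = 0
    · refine hg st ?_
      intro h2
      apply hst
      show f st + g st = 0
      rw [h1, h2, add_zero]
    · exact hf st h1
  zero_mem' := by intro st hst; exact absurd rfl hst
  smul_mem' := by
    intro cc f hf st hst
    refine hf st ?_
    intro h0
    apply hst
    show cc * f st = 0
    rw [h0, mul_zero]

/-- The subspace of left-invariant forms of pure total Koszul–Brylinski degree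
`k = m − p + q`. -/
def totalGrade (k : ℤ) : Submodule ℂ (Forms m) where
  carrier := {f | ∀ st : Idx m, f st ≠ 0 → (m : ℤ) - st.1.card + st.2.card = k}
  add_mem' := by
    intro f g hf hg st hst
    by_cases h1 : f st = 0
    · refine hg st ?_
      intro h2
      apply hst
      show f st + g st = 0
      rw [h1, h2, add_zero]
    · exact hf st h1
  zero_mem' := by intro st hst; exact absurd rfl hst
  smul_mem' := by
    intro cc f hf st hst
    refine hf st ?_
    intro h0
    apply hst
    show cc * f st = 0
    rw [h0, mul_zero]

/-- The dimension of the degree-`k` cohomology of the total complex of the double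
complex of left-invariant forms with total differential `D` (for the
Koszul–Brylinski total grading `k = m − p + q`).  For `D = ∂_π + ∂̄` this computes
`dim_ℂ H_k(M, π)` for a complex parallelisable nilmanifold `M`. -/
def totCohDim (D : Forms m →ₗ[ℂ] Forms m) (k : ℤ) : ℕ :=
  finrank ℂ (↥(totalGrade m k ⊓ LinearMap.ker D) ⧸
    Submodule.comap (totalGrade m k ⊓ LinearMap.ker D).subtype
      (Submodule.map D (totalGrade m (k - 1))))

/-- The invariant Hodge number `h^{p,q}`: the dimension of the `∂̄`-cohomology of
left-invariant forms in bidegree `(p, q)` (by Sakane's theorem this equals the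
Dolbeault Hodge number of a complex parallelisable nilmanifold). -/
def hodgeDim (dc : Fin m → Finset (Fin m) → ℂ) (p q : ℤ) : ℕ :=
  finrank ℂ (↥(grade m p q ⊓ LinearMap.ker (dbarOp m dc)) ⧸
    Submodule.comap (grade m p q ⊓ LinearMap.ker (dbarOp m dc)).subtype
      (Submodule.map (dbarOp m dc) (grade m p (q - 1))))

/-- The `E₁`-degeneracy of the Dolbeault–Koszul–Brylinski spectral sequence of the
nilmanifold with invariant Poisson bivector `B`, expressed by the numerical criterion
`dim_ℂ H_k = ∑_{p-q=m-k} h^{p,q}` for all `0 ≤ k ≤ 2m`. -/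
def e1Degenerates (dc : Fin m → Finset (Fin m) → ℂ) (B : Fin m → Fin m → ℂ) : Prop :=
  ∀ k : ℤ, 0 ≤ k → k ≤ 2 * (m : ℤ) →
    totCohDim m (kbOp m dc B + dbarOp m dc) k =
      ∑ q ∈ Finset.range (m + 1), hodgeDim m dc ((m : ℤ) - k + q) (q : ℤ)

/-- Kronecker delta. -/
def delta (i j : Fin m) : ℂ := if i = j then 1 else 0

/-- The trivector `v ∧ X_b ∧ X_d` evaluated at `(x, y, z)` (as an alternating
3-tensor), where `v = ∑ v^i X_i`. -/
def tri (v : Fin m → ℂ) (b d : Fin m) (x y z : Fin m) : ℂ :=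
  Matrix.det !![v x, v y, v z;
                delta m b x, delta m b y, delta m b z;
                delta m d x, delta m d y, delta m d z]

/-- The Schouten bracket `[P, Q]_S` of two left-invariant bivector fields
`P = ½∑ P^{ab} X_a ∧ X_b`, `Q = ½∑ Q^{cd} X_c ∧ X_d`, evaluated as an alternating
trivector at `(x, y, z)`; here `br a c` gives the coordinates of the Lie bracket
`[X_a, X_c]`, and on decomposables
`[A∧B, C∧D]_S = [A,C]∧B∧D − [A,D]∧B∧C − [B,C]∧A∧D + [B,D]∧A∧C`. -/
def schouten (br : Fin m → Fin m → Fin m → ℂ) (B C : Fin m → Fin m → ℂ)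
    (x y z : Fin m) : ℂ :=
  (4⁻¹ : ℂ) * ∑ a : Fin m, ∑ b : Fin m, ∑ c : Fin m, ∑ d : Fin m,
    B a b * C c d *
      (tri m (br a c) b d x y z - tri m (br a d) b c x y z -
        tri m (br b c) a d x y z + tri m (br b d) a c x y z)


/-- Structure coefficients of the (anti)holomorphic differentials on `𝕀₆`:
`dw¹ = dw⁴ = dw⁶ = 0`, `dw² = −w¹∧w⁴`, `dw³ = −w¹∧w⁵ − w²∧w⁶`, `dw⁵ = −w⁴∧w⁶`
(zero-based indices). -/
def i6DC : Fin 6 → Finset (Fin 6) → ℂ := fun j S =>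
  if j = 1 ∧ S = ({0, 3} : Finset (Fin 6)) then -1
  else if j = 2 ∧ S = ({0, 4} : Finset (Fin 6)) then -1
  else if j = 2 ∧ S = ({1, 5} : Finset (Fin 6)) then -1
  else if j = 4 ∧ S = ({3, 5} : Finset (Fin 6)) then -1
  else 0

/-- Coordinates of the Lie bracket of the Lie algebra of `𝕀₆`
(`i6Bracket a c` = the coordinates of `[X_a, X_c]`): the nonzero brackets are
`[X₁,X₄] = X₂`, `[X₁,X₅] = X₃`, `[X₂,X₆] = X₃`, `[X₄,X₆] = X₅`
(zero-based indices). -/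
def i6Bracket : Fin 6 → Fin 6 → Fin 6 → ℂ := fun a c i =>
  if a = 0 ∧ c = 3 ∧ i = 1 then 1 else if a = 3 ∧ c = 0 ∧ i = 1 then -1
  else if a = 0 ∧ c = 4 ∧ i = 2 then 1 else if a = 4 ∧ c = 0 ∧ i = 2 then -1
  else if a = 1 ∧ c = 5 ∧ i = 2 then 1 else if a = 5 ∧ c = 1 ∧ i = 2 then -1
  else if a = 3 ∧ c = 5 ∧ i = 4 then 1 else if a = 5 ∧ c = 3 ∧ i = 4 then -1
  else 0

/-- The left-invariant bivector field `π₂ = X₁ ∧ X₆` on `𝕀₆`, as an antisymmetric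
coefficient matrix (`π₂ = ½∑ B^{ab} X_a∧X_b`). -/
def pi2 : Fin 6 → Fin 6 → ℂ := fun a b =>
  if a = 0 ∧ b = 5 then 1 else if a = 5 ∧ b = 0 then -1 else 0

/-!
Everything is computed in the complex of invariant forms, where all kernels that occur are
coordinate subspaces for the monomial basis `w^I ∧ w̄^J`. Indices are zero-based, so
`π₂ = X 0 ∧ X 5` and `ι_{π₂} = ι_{X 0} ι_{X 5}`. Total degree `0` is spanned by the cycle
`w^{univ}`, so `H₀ ≅ ℂ`. Total degree `1` is spanned by the `(5,0)`- and `(6,1)`-monomials, which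
are `∂`-closed, so the total differential acts there as `−∂ ι_{π₂}` on the `(5,0)`-part and as
`∂̄` on the `(6,1)`-part, the cross terms vanishing. The first kills `w^{univ∖i}` exactly for
`i ∈ {0, 2, 5}`, the second kills `w^{univ} ∧ w̄^j` exactly for the closed `w^j`,
`j ∈ {0, 3, 5}`. Hence `H₁ ≅ ℂ⁶`, whereas `h^{5,0} + h^{6,1} = 6 + 3`.
-/

section Supported

variable {ι K : Type*}

def supportedOn [Semiring K] (P : ι → Prop) : Submodule K (ι → K) where
  carrier := {f | ∀ i, f i ≠ 0 → P i}
  add_mem' {f g} hf hg i h := by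
    by_contra hP
    simp [Not.imp_symm (hf i) hP, Not.imp_symm (hg i) hP] at h
  zero_mem' _ := absurd rfl
  smul_mem' _ _ hf i h := hf i (right_ne_zero_of_mul h)

variable [Field K] {P : ι → Prop}

theorem supportedOn_eq_bot (h : ∀ i, ¬P i) : supportedOn (K := K) P = ⊥ :=
  (Submodule.eq_bot_iff _).mpr fun _ hf => funext fun i => by_contra fun hi => h i (hf i hi)

def supportedOnEquiv (P : ι → Prop) [DecidablePred P] :
    supportedOn (K := K) P ≃ₗ[K] ({i // P i} → K) where
  toFun f i := f.1 i
  map_add' _ _ := rfl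
  map_smul' _ _ := rfl
  invFun g := ⟨fun i => if h : P i then g ⟨i, h⟩ else 0, fun i hi => by
    by_contra h
    simp [h] at hi⟩
  left_inv f := Subtype.ext <| funext fun i => by
    by_cases h : P i
    · simp [h]
    · simp [h, Not.imp_symm (f.2 i) h]
  right_inv g := funext fun i => by simp [i.2]

theorem finrank_supportedOn [Fintype ι] (P : ι → Prop) [DecidablePred P] :
    finrank K (supportedOn (K := K) P) = Fintype.card {i // P i} := by
  rw [(supportedOnEquiv P).finrank_eq, Module.finrank_fintype_fun_eq_card]

end Supported

theorem finrank_quotient_comap_map_of_le_ker {K M : Type*} [Field K] [AddCommGroup M]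
    [Module K M] (W V : Submodule K M) {D : M →ₗ[K] M} (h : V ≤ LinearMap.ker D) :
    finrank K (W ⧸ (V.map D).comap W.subtype) = finrank K W := by
  rw [LinearMap.le_ker_iff_map.mp h, Submodule.comap_bot, Submodule.ker_subtype]
  exact (Submodule.quotEquivOfEqBot _ rfl).finrank_eq

section Grading

variable {m : ℕ}

theorem grade_eq_supportedOn (p q : ℤ) :
    grade m p q = supportedOn fun st => (st.1.card : ℤ) = p ∧ (st.2.card : ℤ) = q := rfl

theorem totalGrade_eq_bot_of_neg {k : ℤ} (hk : k < 0) : totalGrade m k = ⊥ :=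
  supportedOn_eq_bot fun st _ => by have := card_finset_fin_le st.1; omega

theorem grade_eq_bot_of_lt {p : ℤ} (q : ℤ) (hp : (m : ℤ) < p) : grade m p q = ⊥ :=
  supportedOn_eq_bot fun st h => by have := card_finset_fin_le st.1; omega

theorem grade_eq_bot_of_neg (p : ℤ) {q : ℤ} (hq : q < 0) : grade m p q = ⊥ :=
  supportedOn_eq_bot fun _ h => by omega

theorem totalGrade_zero : totalGrade m 0 = grade m m 0 := by
  ext f
  refine forall_congr' fun st => imp_congr_right fun _ => ?_
  have := card_finset_fin_le st.1
  omega

theorem finrank_grade (p q : ℕ) : finrank ℂ (grade m p q) = m.choose p * m.choose q := by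
  classical
  rw [grade_eq_supportedOn, finrank_supportedOn, Fintype.card_subtype]
  simp only [Nat.cast_inj]
  rw [← Finset.univ_product_univ, Finset.filter_product (p := fun I : Finset (Fin m) => I.card = p)
    (q := fun J : Finset (Fin m) => J.card = q), Finset.card_product,
    ← Finset.powerset_univ, ← Finset.powersetCard_eq_filter, ← Finset.powersetCard_eq_filter]
  simp

theorem eq_of_mem_totalGrade_one {f : Forms m} (hf : f ∈ totalGrade m 1) {st : Idx m}
    (h : f st ≠ 0) :
    (∃ i, st = (Finset.univ.erase i, ∅)) ∨ ∃ j, st = (Finset.univ, {j}) := by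
  have hst := hf st h
  have hle := card_finset_fin_le st.1
  rcases (by omega : st.1.card = m ∨ st.1.card + 1 = m) with h1 | h1
  · obtain ⟨j, hj⟩ := Finset.card_eq_one.mp (by omega : st.2.card = 1)
    exact Or.inr ⟨j, Prod.ext (Finset.eq_univ_of_card _ (by simpa using h1)) hj⟩
  · obtain ⟨i, hi⟩ := Finset.card_eq_one.mp
      (by rw [Finset.card_compl, Fintype.card_fin]; omega : st.1ᶜ.card = 1)
    refine Or.inl ⟨i, Prod.ext ?_ (Finset.card_eq_zero.mp (by omega))⟩
    rw [← compl_compl st.1, hi, Finset.compl_singleton]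

theorem eq_of_mem_grade_top {f : Forms m} {q : ℤ} (hf : f ∈ grade m m q) {st : Idx m}
    (h : f st ≠ 0) : st.1 = Finset.univ ∧ (st.2.card : ℤ) = q :=
  ⟨Finset.eq_univ_of_card _ (by simpa using (hf st h).1), (hf st h).2⟩

theorem totCohDim_eq_finrank {D : Forms m →ₗ[ℂ] Forms m} {k : ℤ}
    (h : totalGrade m (k - 1) ≤ LinearMap.ker D) :
    totCohDim m D k = finrank ℂ ↥(totalGrade m k ⊓ LinearMap.ker D) :=
  finrank_quotient_comap_map_of_le_ker _ _ h

theorem hodgeDim_eq_finrank {dc : Fin m → Finset (Fin m) → ℂ} {p q : ℤ}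
    (h : grade m p (q - 1) ≤ LinearMap.ker (dbarOp m dc)) :
    hodgeDim m dc p q = finrank ℂ ↥(grade m p q ⊓ LinearMap.ker (dbarOp m dc)) :=
  finrank_quotient_comap_map_of_le_ker _ _ h

theorem hodgeDim_eq_zero_of_lt (dc : Fin m → Finset (Fin m) → ℂ) {p : ℤ} (q : ℤ)
    (hp : (m : ℤ) < p) : hodgeDim m dc p q = 0 := by
  rw [hodgeDim_eq_finrank (by rw [grade_eq_bot_of_lt _ hp]; exact bot_le),
    grade_eq_bot_of_lt _ hp, bot_inf_eq, finrank_bot]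

end Grading

section Contraction

variable {m : ℕ}

theorem iotaX_apply (k : Fin m) (f : Forms m) (st : Idx m) :
    iotaX m k f st =
      if k ∉ st.1 then insSign m k st.1 * f (insert k st.1, st.2) else 0 := by
  simp only [iotaX, Matrix.mulVecLin_apply, Matrix.mulVec, dotProduct, Matrix.of_apply]
  by_cases hk : k ∈ st.1
  · rw [if_neg (not_not.mpr hk)]
    exact Finset.sum_eq_zero fun st' _ => by rw [if_neg fun h => h.2.1 hk, zero_mul]
  · rw [if_pos hk, Finset.sum_eq_single (insert k st.1, st.2), if_pos ⟨rfl, hk, rfl⟩]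
    · rintro st' - hst'
      rw [if_neg fun h => hst' (Prod.ext h.1 h.2.2), zero_mul]
    · exact fun h => absurd (Finset.mem_univ _) h

theorem iotaX_apply_ne_zero {k : Fin m} {f : Forms m} {st : Idx m}
    (h : iotaX m k f st ≠ 0) : k ∉ st.1 ∧ f (insert k st.1, st.2) ≠ 0 := by
  rw [iotaX_apply] at h
  by_cases hk : k ∈ st.1
  · simp [hk] at h
  · rw [if_pos hk] at h
    exact ⟨hk, right_ne_zero_of_mul h⟩

theorem insSign_insert {i : Fin m} (k : Fin m) {s : Finset (Fin m)} (hi : i ∉ s) :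
    insSign m k (insert i s) = (if i < k then -1 else 1) * insSign m k s := by
  unfold insSign
  rw [Finset.filter_insert]
  split_ifs
  · rw [Finset.card_insert_of_notMem fun hm => hi (Finset.mem_filter.mp hm).1, pow_succ]
    ring
  · rw [one_mul]

theorem iotaX_comp_iotaX_anticomm (i k : Fin m) :
    iotaX m k ∘ₗ iotaX m i = -(iotaX m i ∘ₗ iotaX m k) := by
  refine LinearMap.ext fun f => funext fun st => ?_
  simp only [LinearMap.comp_apply, LinearMap.neg_apply, Pi.neg_apply, iotaX_apply]
  by_cases hik : i = k
  · subst hik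
    simp
  by_cases hi : i ∈ st.1
  · simp [hi]
  by_cases hk : k ∈ st.1
  · simp [hk]
  rw [if_pos hk, if_pos hi, if_pos (by simp [hik, hi]), if_pos (by simp [Ne.symm hik, hk]),
    Finset.insert_comm, insSign_insert _ hk, insSign_insert _ hi]
  rcases lt_or_gt_of_ne hik with h | h <;> simp [h, h.not_gt] <;> ring

/-- The bivector `X_i ∧ X_k`, as an antisymmetric coefficient matrix. -/
def elemBiv (i k : Fin m) : Fin m → Fin m → ℂ := fun a b =>
  if a = i ∧ b = k then 1 else if a = k ∧ b = i then -1 else 0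

theorem mem_of_elemBiv_ne_zero {i k a b : Fin m} (h : elemBiv i k a b ≠ 0) :
    a ∈ ({i, k} : Set (Fin m)) ∧ b ∈ ({i, k} : Set (Fin m)) := by
  unfold elemBiv at h
  split_ifs at h with h1 h2
  · exact ⟨Or.inl h1.1, Or.inr h1.2⟩
  · exact ⟨Or.inr h2.1, Or.inl h2.2⟩
  · exact absurd rfl h

theorem iotaBiv_elemBiv {i k : Fin m} (hik : i ≠ k) :
    iotaBiv m (elemBiv i k) = iotaX m i ∘ₗ iotaX m k := by
  have hsum : ∑ a, ∑ b, elemBiv i k a b • (iotaX m a ∘ₗ iotaX m b) =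
      iotaX m i ∘ₗ iotaX m k - iotaX m k ∘ₗ iotaX m i := by
    rw [Fintype.sum_eq_add i k hik fun a ha =>
        Finset.sum_eq_zero fun b _ => by simp [elemBiv, ha.1, ha.2],
      Fintype.sum_eq_single k fun b hb => by simp [elemBiv, hb, hik],
      Fintype.sum_eq_single i fun b hb => by simp [elemBiv, hb, Ne.symm hik]]
    simp [elemBiv, hik, Ne.symm hik, sub_eq_add_neg]
    exact neg_one_smul ℂ (iotaX m k ∘ₗ iotaX m i)
  rw [iotaBiv, hsum, iotaX_comp_iotaX_anticomm i k, sub_neg_eq_add, ← two_smul ℂ, smul_smul]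
  norm_num

theorem tri_zero_left (b d x y z : Fin m) : tri m 0 b d x y z = 0 :=
  Matrix.det_eq_zero_of_row_eq_zero 0 fun j => by fin_cases j <;> rfl

theorem schouten_eq_zero_of_bracket_eq_zero {br : Fin m → Fin m → Fin m → ℂ}
    {B C : Fin m → Fin m → ℂ} (s : Set (Fin m)) (hbr : ∀ a ∈ s, ∀ c ∈ s, br a c = 0)
    (hB : ∀ a b, B a b ≠ 0 → a ∈ s ∧ b ∈ s) (hC : ∀ c d, C c d ≠ 0 → c ∈ s ∧ d ∈ s)
    (x y z : Fin m) : schouten m br B C x y z = 0 := by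
  refine mul_eq_zero_of_right _ (Finset.sum_eq_zero fun a _ => Finset.sum_eq_zero fun b _ =>
    Finset.sum_eq_zero fun c _ => Finset.sum_eq_zero fun d _ => ?_)
  by_cases hab : B a b = 0
  · simp [hab]
  by_cases hcd : C c d = 0
  · simp [hcd]
  obtain ⟨ha, hb⟩ := hB a b hab
  obtain ⟨hc, hd⟩ := hC c d hcd
  simp [hbr a ha c hc, hbr a ha d hd, hbr b hb c hc, hbr b hb d hd, tri_zero_left]

end Contraction

section Differentials

variable {m : ℕ} (dc : Fin m → Finset (Fin m) → ℂ)

/-- The coefficient of `w^U` in `∂ w^I`. -/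
def delCoef (I U : Finset (Fin m)) : ℂ :=
  ∑ j ∈ I, insSign m j (I.erase j) *
    ∑ S : Finset (Fin m), dc j S * wedgeCoef m S (I.erase j) U

theorem delOp_apply (f : Forms m) (U J : Finset (Fin m)) :
    delOp m dc f (U, J) = ∑ I, delCoef dc I U * f (I, J) := by
  simp only [delOp, Matrix.mulVecLin_apply, Matrix.mulVec, dotProduct, Matrix.of_apply,
    Fintype.sum_prod_type]
  refine Finset.sum_congr rfl fun I _ => ?_
  rw [Finset.sum_eq_single J (fun J' _ hJ' => by rw [if_neg (Ne.symm hJ'), zero_mul])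
    (fun h => absurd (Finset.mem_univ J) h), if_pos rfl, delCoef]

theorem dbarOp_apply (f : Forms m) (U J : Finset (Fin m)) :
    dbarOp m dc f (U, J) = (-1) ^ U.card * ∑ J', delCoef dc J' J * f (U, J') := by
  simp only [dbarOp, Matrix.mulVecLin_apply, Matrix.mulVec, dotProduct, Matrix.of_apply,
    Fintype.sum_prod_type]
  rw [Finset.mul_sum, Finset.sum_eq_single U (fun U' _ hU' => Finset.sum_eq_zero fun J' _ => by
      rw [if_neg (Ne.symm hU'), zero_mul])
    (fun h => absurd (Finset.mem_univ U) h)]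
  exact Finset.sum_congr rfl fun J' _ => by rw [if_pos rfl, delCoef, mul_assoc]

theorem delCoef_singleton (j : Fin m) (U : Finset (Fin m)) : delCoef dc {j} U = dc j U := by
  simp [delCoef, insSign, wedgeCoef]

def IsDelClosed (I : Finset (Fin m)) : Prop := ∀ U, delCoef dc I U = 0

variable {dc}

theorem isDelClosed_of_forall_not_disjoint {I : Finset (Fin m)}
    (h : ∀ j ∈ I, ∀ S, dc j S ≠ 0 → ¬Disjoint S (I.erase j)) : IsDelClosed dc I :=
  fun U => Finset.sum_eq_zero fun j hj => by
    refine mul_eq_zero_of_right _ (Finset.sum_eq_zero fun S _ => ?_)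
    by_cases hS : dc j S = 0
    · rw [hS, zero_mul]
    · rw [wedgeCoef, if_neg fun hd => h j hj S hS hd.1, mul_zero]

theorem delOp_eq_zero {f : Forms m} (hf : ∀ st, f st ≠ 0 → IsDelClosed dc st.1) :
    delOp m dc f = 0 :=
  funext fun ⟨U, J⟩ => by
    rw [delOp_apply]
    refine Finset.sum_eq_zero fun I _ => ?_
    by_cases h : f (I, J) = 0
    · rw [h, mul_zero]
    · rw [hf _ h U, zero_mul]

theorem dbarOp_eq_zero {f : Forms m} (hf : ∀ st, f st ≠ 0 → IsDelClosed dc st.2) :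
    dbarOp m dc f = 0 :=
  funext fun ⟨U, J⟩ => by
    rw [dbarOp_apply]
    refine mul_eq_zero_of_right _ (Finset.sum_eq_zero fun J' _ => ?_)
    by_cases h : f (U, J') = 0
    · rw [h, mul_zero]
    · rw [hf _ h J, zero_mul]

theorem grade_zero_le_ker_dbarOp (p : ℤ) : grade m p 0 ≤ LinearMap.ker (dbarOp m dc) :=
  fun f hf => dbarOp_eq_zero fun st h U => by
    rw [Finset.card_eq_zero.mp (by exact_mod_cast (hf st h).2 : st.2.card = 0)]
    exact Finset.sum_empty

theorem hodgeDim_zero_right (p : ℕ) : hodgeDim m dc p 0 = m.choose p := by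
  have hdim := finrank_grade (m := m) p 0
  rw [Nat.cast_zero, Nat.choose_zero_right, mul_one] at hdim
  rw [hodgeDim_eq_finrank (by rw [grade_eq_bot_of_neg _ (by norm_num)]; exact bot_le),
    inf_eq_left.mpr (grade_zero_le_ker_dbarOp _), hdim]

theorem dbarOp_apply_of_card_eq_one {f : Forms m} {U : Finset (Fin m)}
    (hf : ∀ J', f (U, J') ≠ 0 → J'.card = 1) (J : Finset (Fin m)) :
    dbarOp m dc f (U, J) = (-1) ^ U.card * ∑ j, dc j J * f (U, {j}) := by
  have hsupp : ∀ J' ∈ Finset.univ, J' ∉ Finset.univ.image singleton →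
      delCoef dc J' J * f (U, J') = 0 := fun J' _ hJ' => by
    refine mul_eq_zero_of_right _ (by_contra fun h => hJ' ?_)
    obtain ⟨j, rfl⟩ := Finset.card_eq_one.mp (hf J' h)
    exact Finset.mem_image_of_mem _ (Finset.mem_univ j)
  rw [dbarOp_apply, ← Finset.sum_subset (Finset.subset_univ _) hsupp,
    Finset.sum_image fun _ _ _ _ h => Finset.singleton_injective h]
  simp only [delCoef_singleton]

theorem kbOp_elemBiv_add_dbarOp_eq_zero {i k : Fin m} (hik : i ≠ k) {f : Forms m}
    (hdel : ∀ st, f st ≠ 0 → IsDelClosed dc st.1)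
    (hiota : ∀ st, f st ≠ 0 → i ∈ st.1 → k ∈ st.1 → IsDelClosed dc ((st.1.erase k).erase i))
    (hdbar : ∀ st, f st ≠ 0 → IsDelClosed dc st.2) :
    (kbOp m dc (elemBiv i k) + dbarOp m dc) f = 0 := by
  have hdelIota : delOp m dc (iotaX m i (iotaX m k f)) = 0 := delOp_eq_zero fun st h => by
    obtain ⟨hi, h⟩ := iotaX_apply_ne_zero h
    obtain ⟨hk, h⟩ := iotaX_apply_ne_zero h
    simpa [Finset.erase_insert hk, Finset.erase_insert hi] using
      hiota _ h (Finset.mem_insert_of_mem (Finset.mem_insert_self i _))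
        (Finset.mem_insert_self k _)
  simp [kbOp, iotaBiv_elemBiv hik, delOp_eq_zero hdel, hdelIota, dbarOp_eq_zero hdbar]

end Differentials

section I6

set_option maxRecDepth 10000

abbrev i6TotalDiff : Forms 6 →ₗ[ℂ] Forms 6 := kbOp 6 i6DC pi2 + dbarOp 6 i6DC

theorem pi2_eq_elemBiv : pi2 = elemBiv 0 5 := rfl

theorem schouten_pi2_pi2 (x y z : Fin 6) : schouten 6 i6Bracket pi2 pi2 x y z = 0 := by
  have hbr : ∀ a ∈ ({0, 5} : Set (Fin 6)), ∀ c ∈ ({0, 5} : Set (Fin 6)), i6Bracket a c = 0 := by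
    rintro a (rfl | rfl) c (rfl | rfl) <;> funext i <;> simp [i6Bracket]
  rw [pi2_eq_elemBiv]
  exact schouten_eq_zero_of_bracket_eq_zero _ hbr (fun _ _ => mem_of_elemBiv_ne_zero)
    (fun _ _ => mem_of_elemBiv_ne_zero) x y z

def i6DCSupport : Finset (Fin 6 × Finset (Fin 6)) :=
  {(1, {0, 3}), (2, {0, 4}), (2, {1, 5}), (4, {3, 5})}

theorem mem_i6DCSupport_of_ne_zero {j : Fin 6} {S : Finset (Fin 6)} (h : i6DC j S ≠ 0) :
    (j, S) ∈ i6DCSupport := by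
  unfold i6DC at h
  split_ifs at h <;> simp_all [i6DCSupport]

theorem sum_i6DC_mul (j : Fin 6) (g : Finset (Fin 6) → ℂ) :
    ∑ S, i6DC j S * g S = i6DC j {0, 3} * g {0, 3} + i6DC j {0, 4} * g {0, 4} +
      i6DC j {1, 5} * g {1, 5} + i6DC j {3, 5} * g {3, 5} := by
  have hsupp : ∀ p ∈ i6DCSupport, p.2 ∈ ({{0, 3}, {0, 4}, {1, 5}, {3, 5}} : Finset _) := by
    decide
  rw [← Finset.sum_subset (Finset.subset_univ _) fun S _ hS => by
    rw [not_imp_comm.mp (fun h => hsupp _ (mem_i6DCSupport_of_ne_zero h)) hS, zero_mul]]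
  rw [Finset.sum_insert (by decide), Finset.sum_insert (by decide), Finset.sum_insert (by decide),
    Finset.sum_singleton]
  ring

theorem isDelClosed_i6DC {I : Finset (Fin 6)}
    (h : ∀ p ∈ i6DCSupport, p.1 ∈ I → ¬Disjoint p.2 (I.erase p.1)) : IsDelClosed i6DC I :=
  isDelClosed_of_forall_not_disjoint fun _ hj _ hS => h _ (mem_i6DCSupport_of_ne_zero hS) hj

theorem isDelClosed_i6DC_univ_erase (i : Fin 6) : IsDelClosed i6DC (Finset.univ.erase i) :=
  isDelClosed_i6DC (by revert i; decide)

theorem delOp_i6DC_eq_zero_of_mem_totalGrade_one {f : Forms 6} (hf : f ∈ totalGrade 6 1) :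
    delOp 6 i6DC f = 0 :=
  delOp_eq_zero fun st h => by
    rcases eq_of_mem_totalGrade_one hf h with ⟨i, rfl⟩ | ⟨j, rfl⟩
    exacts [isDelClosed_i6DC_univ_erase i, isDelClosed_i6DC (I := Finset.univ) (by decide)]

theorem i6TotalDiff_apply {f : Forms 6} (hf : f ∈ totalGrade 6 1) (x : Idx 6) :
    i6TotalDiff f x = dbarOp 6 i6DC f x - delOp 6 i6DC (iotaX 6 0 (iotaX 6 5 f)) x := by
  simp [kbOp, pi2_eq_elemBiv, iotaBiv_elemBiv (show (0 : Fin 6) ≠ 5 by decide),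
    delOp_i6DC_eq_zero_of_mem_totalGrade_one hf, add_comm, sub_eq_add_neg]

theorem i6TotalDiff_apply_univ {f : Forms 6} (hf : f ∈ totalGrade 6 1) {J : Finset (Fin 6)}
    (hJ : J.card = 2) :
    i6TotalDiff f (Finset.univ, J) = ∑ j, i6DC j J * f (Finset.univ, {j}) := by
  have hcard : ∀ st, f st ≠ 0 → st.2.card ≤ 1 := fun st h => by
    rcases eq_of_mem_totalGrade_one hf h with ⟨i, rfl⟩ | ⟨j, rfl⟩ <;> simp
  have hdelIota : delOp 6 i6DC (iotaX 6 0 (iotaX 6 5 f)) (Finset.univ, J) = 0 := by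
    rw [delOp_apply]
    refine Finset.sum_eq_zero fun I _ => mul_eq_zero_of_right _ (by_contra fun h => ?_)
    have := hcard _ (iotaX_apply_ne_zero (iotaX_apply_ne_zero h).2).2
    dsimp only at this
    omega
  have hone : ∀ J', f (Finset.univ, J') ≠ 0 → J'.card = 1 := fun J' h => by
    rcases eq_of_mem_totalGrade_one hf h with ⟨i, hi⟩ | ⟨j, hj⟩
    · simpa using congrArg (i ∈ ·) (Prod.mk.inj hi).1
    · rw [(Prod.mk.inj hj).2, Finset.card_singleton]
  rw [i6TotalDiff_apply hf, hdelIota, sub_zero, dbarOp_apply_of_card_eq_one hone]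
  norm_num

theorem iotaX_zero_iotaX_five_apply (f : Forms 6) {i : Fin 6}
    (hi : i ∈ ({1, 2, 3, 4} : Finset (Fin 6))) :
    iotaX 6 0 (iotaX 6 5 f) (({1, 2, 3, 4} : Finset (Fin 6)).erase i, ∅) =
      f (Finset.univ.erase i, ∅) := by
  obtain ⟨h0, h5, hins, hsign0, hsign5⟩ := (by decide : ∀ i ∈ ({1, 2, 3, 4} : Finset (Fin 6)),
    let I := ({1, 2, 3, 4} : Finset (Fin 6)).erase i
    0 ∉ I ∧ 5 ∉ insert 0 I ∧ insert 5 (insert 0 I) = Finset.univ.erase i ∧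
      (I.filter (· < 0)).card = 0 ∧ ((insert 0 I).filter (· < 5)).card = 4) i hi
  simp only [iotaX_apply, insSign, if_pos h0, if_pos h5, hins, hsign0, hsign5]
  norm_num

theorem mem_of_iotaX_zero_iotaX_five_apply_ne_zero {f : Forms 6} (hf : f ∈ totalGrade 6 1)
    {I : Finset (Fin 6)} (h : iotaX 6 0 (iotaX 6 5 f) (I, ∅) ≠ 0) :
    I ∈ ({1, 2, 3, 4} : Finset (Fin 6)).image ({1, 2, 3, 4} : Finset (Fin 6)).erase := by
  obtain ⟨h0, h⟩ := iotaX_apply_ne_zero h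
  obtain ⟨h5, h⟩ := iotaX_apply_ne_zero h
  rcases eq_of_mem_totalGrade_one hf h with ⟨i, hi⟩ | ⟨j, hj⟩
  · exact (by decide : ∀ I : Finset (Fin 6), ∀ i, 0 ∉ I → 5 ∉ insert 0 I →
      insert 5 (insert 0 I) = Finset.univ.erase i →
        I ∈ ({1, 2, 3, 4} : Finset (Fin 6)).image ({1, 2, 3, 4} : Finset (Fin 6)).erase)
      I i h0 h5 (Prod.mk.inj hi).1
  · exact absurd (Prod.mk.inj hj).2.symm (Finset.singleton_ne_empty j)

theorem i6TotalDiff_apply_of_card_eq_four {f : Forms 6} (hf : f ∈ totalGrade 6 1)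
    {U : Finset (Fin 6)} (hU : U.card = 4) :
    i6TotalDiff f (U, ∅) = -(delCoef i6DC {2, 3, 4} U * f (Finset.univ.erase 1, ∅) +
      delCoef i6DC {1, 3, 4} U * f (Finset.univ.erase 2, ∅) +
      delCoef i6DC {1, 2, 4} U * f (Finset.univ.erase 3, ∅) +
      delCoef i6DC {1, 2, 3} U * f (Finset.univ.erase 4, ∅)) := by
  have hdbar : dbarOp 6 i6DC f (U, ∅) = 0 := by
    rw [dbarOp_apply]
    refine mul_eq_zero_of_right _ (Finset.sum_eq_zero fun J' _ =>
      mul_eq_zero_of_right _ (by_contra fun h => ?_))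
    rcases eq_of_mem_totalGrade_one hf h with ⟨i, hi⟩ | ⟨j, hj⟩
    · simpa [hU] using congrArg Finset.card (Prod.mk.inj hi).1
    · simpa [hU] using congrArg Finset.card (Prod.mk.inj hj).1
  rw [i6TotalDiff_apply hf, hdbar, zero_sub, delOp_apply, ← Finset.sum_subset
    (Finset.subset_univ _) fun I _ hI => mul_eq_zero_of_right _
      (not_imp_comm.mp (mem_of_iotaX_zero_iotaX_five_apply_ne_zero hf) hI),
    Finset.sum_image (Finset.erase_injOn _),
    Finset.sum_congr rfl fun i hi => by rw [iotaX_zero_iotaX_five_apply f hi]]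
  rw [Finset.sum_insert (by decide), Finset.sum_insert (by decide), Finset.sum_insert (by decide),
    Finset.sum_singleton, ← add_assoc, ← add_assoc]
  rfl

theorem i6_coeffs_eq_zero_of_one_form_closed {b : Fin 6 → ℂ}
    (h : ∀ J : Finset (Fin 6), J.card = 2 → ∑ j, i6DC j J * b j = 0) :
    b 1 = 0 ∧ b 2 = 0 ∧ b 4 = 0 := by
  have h03 := h {0, 3} rfl
  have h04 := h {0, 4} rfl
  have h35 := h {3, 5} rfl
  simp +decide [i6DC] at h03 h04 h35
  exact ⟨h03, h04, h35⟩

theorem i6_coeffs_eq_zero_of_three_form_closed {a : Fin 6 → ℂ}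
    (h : ∀ U : Finset (Fin 6), U.card = 4 →
      delCoef i6DC {2, 3, 4} U * a 1 + delCoef i6DC {1, 3, 4} U * a 2 +
        delCoef i6DC {1, 2, 4} U * a 3 + delCoef i6DC {1, 2, 3} U * a 4 = 0) :
    a 1 = 0 ∧ a 3 = 0 ∧ a 4 = 0 := by
  have h134 : ∀ U, delCoef i6DC {1, 3, 4} U = 0 := isDelClosed_i6DC (by decide)
  -- At `w^{1345}`, `w^{0234}`, `w^{0134}` only `∂ w^{234}`, `∂ w^{124}`, `∂ w^{123}` respectively
  -- have a nonzero coefficient.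
  have h1 := h {1, 3, 4, 5} rfl
  have h3 := h {0, 2, 3, 4} rfl
  have h4 := h {0, 1, 3, 4} rfl
  simp only [h134, zero_mul, add_zero] at h1 h3 h4
  simp only [delCoef, sum_i6DC_mul] at h1 h3 h4
  simp +decide [i6DC, wedgeCoef, insSign] at h1 h3 h4
  exact ⟨h1, h3, h4⟩

def i6CycleSupport : Finset (Idx 6) :=
  {(Finset.univ.erase 0, ∅), (Finset.univ.erase 2, ∅), (Finset.univ.erase 5, ∅),
    (Finset.univ, {0}), (Finset.univ, {3}), (Finset.univ, {5})}

theorem i6TotalDiff_eq_zero_of_supported {f : Forms 6}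
    (hf : ∀ st, f st ≠ 0 → st ∈ i6CycleSupport ∨ st = (Finset.univ, ∅)) :
    i6TotalDiff f = 0 := by
  refine kbOp_elemBiv_add_dbarOp_eq_zero (by decide) (fun st h => ?_) (fun st h _ _ => ?_)
      (fun st h => ?_) <;>
  · rcases hf st h with hst | rfl
    · simp only [i6CycleSupport, Finset.mem_insert, Finset.mem_singleton] at hst
      rcases hst with rfl | rfl | rfl | rfl | rfl | rfl <;> exact isDelClosed_i6DC (by decide)
    · exact isDelClosed_i6DC (by decide)

theorem totalGrade_zero_le_ker_i6TotalDiff : totalGrade 6 0 ≤ LinearMap.ker i6TotalDiff := by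
  intro f hf
  rw [totalGrade_zero] at hf
  refine i6TotalDiff_eq_zero_of_supported fun st h => Or.inr ?_
  obtain ⟨h1, h2⟩ := eq_of_mem_grade_top hf h
  exact Prod.ext h1 (Finset.card_eq_zero.mp (by exact_mod_cast h2))

theorem totalGrade_one_inf_ker_i6TotalDiff :
    totalGrade 6 1 ⊓ LinearMap.ker i6TotalDiff = supportedOn (· ∈ i6CycleSupport) := by
  apply le_antisymm
  · rintro f ⟨hf, hker⟩
    have hD : ∀ x, i6TotalDiff f x = 0 := congrFun (LinearMap.mem_ker.mp hker)
    obtain ⟨hb1, hb2, hb4⟩ := i6_coeffs_eq_zero_of_one_form_closed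
        (b := fun j => f (Finset.univ, {j})) fun J hJ => by
      rw [← i6TotalDiff_apply_univ hf hJ, hD]
    obtain ⟨ha1, ha3, ha4⟩ := i6_coeffs_eq_zero_of_three_form_closed
        (a := fun i => f (Finset.univ.erase i, ∅)) fun U hU => by
      rw [← neg_eq_zero, ← i6TotalDiff_apply_of_card_eq_four hf hU, hD]
    intro st h
    rcases eq_of_mem_totalGrade_one hf h with ⟨i, rfl⟩ | ⟨j, rfl⟩
    · fin_cases i <;> simp_all [i6CycleSupport]
    · fin_cases j <;> simp_all [i6CycleSupport]
  · intro f hf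
    refine ⟨fun st h => ?_, i6TotalDiff_eq_zero_of_supported fun st h => Or.inl (hf st h)⟩
    have hst := hf st h
    simp only [i6CycleSupport, Finset.mem_insert, Finset.mem_singleton] at hst
    rcases hst with rfl | rfl | rfl | rfl | rfl | rfl <;> rfl

theorem grade_six_one_inf_ker_dbarOp_i6DC :
    grade 6 6 1 ⊓ LinearMap.ker (dbarOp 6 i6DC) =
      supportedOn (· ∈ ({(Finset.univ, {0}), (Finset.univ, {3}), (Finset.univ, {5})} :
        Finset (Idx 6))) := by
  apply le_antisymm
  · rintro f ⟨hf, hker⟩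
    have hone : ∀ J', f (Finset.univ, J') ≠ 0 → J'.card = 1 := fun J' h => by
      exact_mod_cast (eq_of_mem_grade_top hf h).2
    obtain ⟨hb1, hb2, hb4⟩ := i6_coeffs_eq_zero_of_one_form_closed
        (b := fun j => f (Finset.univ, {j})) fun J _ => by
      have h := dbarOp_apply_of_card_eq_one (dc := i6DC) hone J
      rw [LinearMap.mem_ker.mp hker] at h
      norm_num at h
      exact h.symm
    intro st h
    obtain ⟨h1, h2⟩ := eq_of_mem_grade_top hf h
    obtain ⟨j, hj⟩ := Finset.card_eq_one.mp (by exact_mod_cast h2 : st.2.card = 1)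
    obtain rfl : st = (Finset.univ, {j}) := Prod.ext h1 hj
    fin_cases j <;> simp_all
  · intro f hf
    have hst : ∀ st, f st ≠ 0 → st.1 = Finset.univ ∧ (st.2 = {0} ∨ st.2 = {3} ∨ st.2 = {5}) :=
      fun st h => by
        have := hf st h
        simp only [Finset.mem_insert, Finset.mem_singleton, Prod.ext_iff] at this
        tauto
    refine ⟨fun st h => ?_, dbarOp_eq_zero fun st h => ?_⟩
    · obtain ⟨h1, h2 | h2 | h2⟩ := hst st h <;> simp [h1, h2]
    · obtain ⟨-, h2 | h2 | h2⟩ := hst st h <;> rw [h2] <;> exact isDelClosed_i6DC (by decide)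

theorem totCohDim_i6TotalDiff_zero : totCohDim 6 i6TotalDiff 0 = 1 := by
  rw [totCohDim_eq_finrank (by rw [totalGrade_eq_bot_of_neg (by norm_num)]; exact bot_le),
    inf_eq_left.mpr totalGrade_zero_le_ker_i6TotalDiff, totalGrade_zero]
  simpa using finrank_grade (m := 6) 6 0

theorem totCohDim_i6TotalDiff_one : totCohDim 6 i6TotalDiff 1 = 6 := by
  rw [totCohDim_eq_finrank totalGrade_zero_le_ker_i6TotalDiff,
    totalGrade_one_inf_ker_i6TotalDiff, finrank_supportedOn, Fintype.card_coe]
  rfl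

theorem hodgeDim_i6DC_six_one : hodgeDim 6 i6DC 6 1 = 3 := by
  rw [hodgeDim_eq_finrank (grade_zero_le_ker_dbarOp _), grade_six_one_inf_ker_dbarOp_i6DC,
    finrank_supportedOn, Fintype.card_coe]
  rfl

end I6

/-- **`E₁`-non-degeneracy for `(𝕀₆, π₂)`** (Section 6.3.2): `π₂ = X₁ ∧ X₆` is a
holomorphic Poisson structure on `𝕀₆` (`[π₂, π₂]_S = 0`) with
`H₀(𝕀₆, π₂) ≅ ℂ` and `H₁(𝕀₆, π₂) ≅ ℂ⁶`, whereas
`dim H_∂̄^{5,0}(𝕀₆) + dim H_∂̄^{6,1}(𝕀₆) = 6 + 3 = 9`; consequently the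
Dolbeault–Koszul–Brylinski spectral sequence of `(𝕀₆, π₂)` does not degenerate at
the `E₁`-page. -/
theorem i6_pi2_not_e1_degenerate :
    (∀ x y z : Fin 6, schouten 6 i6Bracket pi2 pi2 x y z = 0) ∧
    totCohDim 6 (kbOp 6 i6DC pi2 + dbarOp 6 i6DC) 0 = 1 ∧
    totCohDim 6 (kbOp 6 i6DC pi2 + dbarOp 6 i6DC) 1 = 6 ∧
    hodgeDim 6 i6DC 5 0 = 6 ∧
    hodgeDim 6 i6DC 6 1 = 3 ∧
    ¬ e1Degenerates 6 i6DC pi2 := by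
  have h50 : hodgeDim 6 i6DC 5 0 = 6 := hodgeDim_zero_right 5
  refine ⟨schouten_pi2_pi2, totCohDim_i6TotalDiff_zero, totCohDim_i6TotalDiff_one, h50,
    hodgeDim_i6DC_six_one, fun hdeg => ?_⟩
  have h := hdeg 1 (by norm_num) (by norm_num)
  norm_num [Finset.sum_range_succ, totCohDim_i6TotalDiff_one, h50, hodgeDim_i6DC_six_one,
    hodgeDim_eq_zero_of_lt] at h

end InvForms
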